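/- Let d ≥ 4 be an integer, p a prime number, and x₀ ∈ ℚ̄ with x₀^{d−2} − x₀ − p^{−(d−3)} = 0. Let (x_n,y_n)_{n≥0} be a sequence in ℚ̄² with (x_0,y_0) = (x₀,x₀) and, for every n ≥ 1, y_n ≠ 0, x_{n−1} = x_n^d / y_n² − p^{−(d−3)}, and y_{n−1} = x_n. Let t be a real number with either d ≥ 5 and t ≥ 1, or d = 4 and t ≥ (1+√3)/2. Suppose there exist an index n₀ ≥ 0 and a ring embedding σ : ℚ̄ → ℂ such that |σ(y_{n₀})| ≥ (1 + 1/(2t))·|σ(x_{n₀})| and |σ(x_{n₀})| ≥ t. Then: (a) for every real C with 0 < C < (d−1)/2 there is an N such that for every n ≥ N and every number field K ⊆ ℚ̄ containing x_n and y_n, the affine absolute logarithmic Weil height of (x_n,y_n) computed in K is at least C^n; and (b) the set {(x_n,y_n) : n ≥ 0} is Zariski dense in the affine plane over ℚ̄, i.e. the only polynomial in ℚ̄[x,y] vanishing at every (x_n,y_n) is the zero polynomial. -/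

import Mathlib

open NumberField IsDedekindDomain

/-- A fixed algebraic closure of `ℚ`. -/
noncomputable def Qbar : Type := AlgebraicClosure ℚ

noncomputable instance : Field Qbar := inferInstanceAs (Field (AlgebraicClosure ℚ))
noncomputable instance : Algebra ℚ Qbar := inferInstanceAs (Algebra ℚ (AlgebraicClosure ℚ))

/-- The local factor `|a|_v^{[K_v : ℚ_p]} = N(𝔭_v)^{-ord_v(a)}` at a finite place `v`
of a number field `K`; with the normalization `|a|_v = |N_{K_v/ℚ_p}(a)|_p^{1/[K_v:ℚ_p]}`
this is exactly `|a|_v` raised to the local degree `[K_v : ℚ_p]`. -/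
noncomputable def localFin {K : Type*} [Field K] [NumberField K]
    (v : HeightOneSpectrum (𝓞 K)) (a : K) : ℝ :=
  if h : (Ideal.absNorm v.asIdeal : NNReal) ≠ 0 then
    ((WithZeroMulInt.toNNReal h (v.valuation K a) : NNReal) : ℝ)
  else 0

/-- The affine absolute logarithmic Weil height of a tuple of elements of a number field
`K ⊆ ℚ̄`:  `h(a₁,…,a_m) = (1/[K:ℚ]) · ( Σ_w [K_w:ℝ]·log max{1,|a_i|_w}
+ Σ_v log max{1, |a_i|_v^{[K_v:ℚ_p]}} )`, the sums running over the infinite and finite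
places of `K`; this equals `Σ_{v ∈ M_K} ([K_v:ℚ_v]/[K:ℚ]) log max{1,|a_i|_v}` in the
standard normalization. -/
noncomputable def heightK (K : IntermediateField ℚ Qbar) (hfd : FiniteDimensional ℚ K)
    (l : List K) : ℝ :=
  letI : NumberField K := { to_charZero := inferInstance, to_finiteDimensional := hfd }
  (Module.finrank ℚ K : ℝ)⁻¹ *
    ((∑ᶠ w : InfinitePlace K, (w.mult : ℝ) * Real.log ((l.map (fun a => w a)).foldr max 1)) +
     ∑ᶠ v : HeightOneSpectrum (𝓞 K), Real.log ((l.map (fun a => localFin v a)).foldr max 1))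

/-- Being a backward orbit of `(x₀,x₀)` under `f_{d,p}(x,y) = (x^d/y² - p^{-(d-3)}, x)`:
`s 0 = (x₀,x₀)` and, for every `n ≥ 1`, `y_n ≠ 0`, `x_{n-1} = x_n^d/y_n² - p^{-(d-3)}` and
`y_{n-1} = x_n`, i.e. `f_{d,p}(s n) = s (n-1)`. -/
def IsBackwardOrbit (d p : ℕ) (x₀ : Qbar) (s : ℕ → Qbar × Qbar) : Prop :=
  s 0 = (x₀, x₀) ∧
    ∀ n : ℕ, (s (n + 1)).2 ≠ 0 ∧
      (s n).1 = (s (n + 1)).1 ^ d / (s (n + 1)).2 ^ 2 - ((p : Qbar) ^ (d - 3))⁻¹ ∧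
      (s n).2 = (s (n + 1)).1

/-!
Under a complex embedding `ψ` the norms `X n = ‖ψ xₙ‖`, `Y n = ‖ψ yₙ‖` satisfy `X (n+1) = Y n`
and `Y (n+1)² · ‖ψ xₙ + p^{-(d-3)}‖ = Y n ^ d`, where the middle factor is within `1/2` of `X n`.
The bound on `t` makes the region `t ≤ x`, `(1 + 1/(2t)) x ≤ y` forward invariant, and inside it
`log Y` grows at least like `((d-1)/2)ⁿ`.

(a) All embeddings of `K` that extend to embeddings of `ℚ̄` agreeing with `σ` on
`ℚ(x_{n₀}, y_{n₀})` start in this region, and there are at least `[K:ℚ] / [ℚ(x_{n₀}, y_{n₀}):ℚ]`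
of them; their archimedean contributions alone give the height bound.

(b) `vₙ = log ‖σ yₙ‖` satisfies `2 v_{n+2} - d v_{n+1} + vₙ = O(1)`, hence `v_{n+1} - λ vₙ = O(1)`
for the root `λ = (d + √(d² - 8))/4` of `2X² - dX + 1`, whose conjugate has modulus `< 1`.
As `λ` is irrational, every nontrivial integral combination `a vₙ + b v_{n+1}` tends to `±∞`.
A polynomial vanishing at `(x_{n+1}, y_{n+1}) = (yₙ, y_{n+1})` would force two of its monomials
to have comparable size there, that is, such a combination to stay bounded.
-/

open Filter Topology
open scoped Finset

lemma abs_le_max_of_abs_succ_le {u : ℕ → ℝ} {c E : ℝ} (hc0 : 0 ≤ c) (hc : c < 1)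
    (h : ∀ n, |u (n + 1)| ≤ c * |u n| + E) (n : ℕ) : |u n| ≤ max |u 0| (E / (1 - c)) := by
  induction n with
  | zero => exact le_max_left _ _
  | succ n ih =>
    have hE : E ≤ (1 - c) * max |u 0| (E / (1 - c)) := by
      rw [← div_le_iff₀' (by linarith)]
      exact le_max_right _ _
    nlinarith [h n, mul_le_mul_of_nonneg_left ih hc0]

lemma exists_abs_sub_mul_le_of_abs_recurrence_le {v : ℕ → ℝ} {a b l m E : ℝ}
    (hsum : l + m = a) (hprod : l * m = b) (hm : |m| < 1)
    (h : ∀ n, |v (n + 2) - a * v (n + 1) + b * v n| ≤ E) :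
    ∃ Z, ∀ n, |v (n + 1) - l * v n| ≤ Z := by
  refine ⟨_, abs_le_max_of_abs_succ_le (u := fun n => v (n + 1) - l * v n) (E := E)
    (abs_nonneg m) hm fun n => ?_⟩
  have hu : v (n + 2) - l * v (n + 1) =
      m * (v (n + 1) - l * v n) + (v (n + 2) - a * v (n + 1) + b * v n) := by
    rw [← hsum, ← hprod]; ring
  calc |v (n + 1 + 1) - l * v (n + 1)|
      ≤ |m * (v (n + 1) - l * v n)| + |v (n + 2) - a * v (n + 1) + b * v n| := by
        rw [show n + 1 + 1 = n + 2 by rfl, hu]; exact abs_add_le _ _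
    _ ≤ |m| * |v (n + 1) - l * v n| + E := by rw [abs_mul]; linarith [h n]

lemma tendsto_abs_intCast_mul_add_intCast_mul {v : ℕ → ℝ} {l Z : ℝ} (hl : Irrational l)
    (hv : Tendsto v atTop atTop) (hZ : ∀ n, |v (n + 1) - l * v n| ≤ Z) {a b : ℤ}
    (hab : a ≠ 0 ∨ b ≠ 0) : Tendsto (fun n => |a * v n + b * v (n + 1)|) atTop atTop := by
  have hc : (a + b * l : ℝ) ≠ 0 := by
    rcases eq_or_ne b 0 with rfl | hb
    · simpa using hab.resolve_right (not_not.mpr rfl)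
    · exact ((hl.intCast_mul hb).intCast_add a).ne_zero
  refine tendsto_atTop_mono (fun n => ?_)
    (tendsto_atTop_add_const_right _ (-(|(b : ℝ)| * Z)) (hv.const_mul_atTop (abs_pos.mpr hc)))
  have hsplit : (a : ℝ) * v n + b * v (n + 1) = (a + b * l) * v n + b * (v (n + 1) - l * v n) := by
    ring
  rw [hsplit]
  have h1 : |a + b * l| * v n ≤ |(a + b * l) * v n| := by
    rw [abs_mul]; exact mul_le_mul_of_nonneg_left (le_abs_self _) (abs_nonneg _)
  have h2 : |(b : ℝ) * (v (n + 1) - l * v n)| ≤ |(b : ℝ)| * Z := by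
    rw [abs_mul]; exact mul_le_mul_of_nonneg_left (hZ n) (abs_nonneg _)
  have h3 := abs_sub_abs_le_abs_add ((a + b * l : ℝ) * v n) ((b : ℝ) * (v (n + 1) - l * v n))
  linarith

lemma abs_log_sub_log_le_log_two {x b : ℝ} (hx : 1 ≤ x) (hb : |b - x| ≤ 1 / 2) :
    |Real.log b - Real.log x| ≤ Real.log 2 := by
  rw [abs_le] at hb
  have hx0 : 0 < x := by linarith
  have hupper : Real.log b ≤ Real.log 2 + Real.log x := by
    rw [← Real.log_mul two_ne_zero hx0.ne']
    exact Real.log_le_log (by linarith) (by linarith)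
  have hlower : Real.log x - Real.log 2 ≤ Real.log b := by
    rw [← Real.log_div hx0.ne' two_ne_zero]
    exact Real.log_le_log (by linarith) (by linarith)
  rw [abs_le]
  constructor <;> linarith

lemma not_isSquare_sq_sub_eight {d : ℕ} (hd : 4 ≤ d) : ¬IsSquare (d ^ 2 - 8) := by
  rintro ⟨k, hk⟩
  have h8 : 8 ≤ d ^ 2 := by nlinarith
  replace hk : d * d = k * k + 8 := by rw [← sq]; omega
  have hkd : k < d := by nlinarith
  have hk3 : k ≤ 3 := by nlinarith [Nat.mul_le_mul hkd hkd]
  have hd4 : d = 4 := by nlinarith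
  subst hd4
  interval_cases k <;> omega

/-- `l` and `m` are the roots of `2X² - dX + 1`. -/
lemma exists_irrational_and_abs_lt_one_roots {d : ℕ} (hd : 4 ≤ d) :
    ∃ l m : ℝ, Irrational l ∧ |m| < 1 ∧ l + m = d / 2 ∧ l * m = 1 / 2 := by
  have hd' : (4 : ℝ) ≤ d := by exact_mod_cast hd
  have hcast : ((d ^ 2 - 8 : ℕ) : ℝ) = (d : ℝ) ^ 2 - 8 := by
    rw [Nat.cast_sub (by nlinarith)]; push_cast; ring
  have hirr : Irrational √((d : ℝ) ^ 2 - 8) := by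
    rw [← hcast]; exact irrational_sqrt_natCast_iff.mpr (not_isSquare_sq_sub_eight hd)
  have hsq : √((d : ℝ) ^ 2 - 8) ^ 2 = (d : ℝ) ^ 2 - 8 := Real.sq_sqrt (by nlinarith)
  have hge : (d : ℝ) - 2 ≤ √((d : ℝ) ^ 2 - 8) :=
    Real.le_sqrt_of_sq_le (by nlinarith)
  have hle : √((d : ℝ) ^ 2 - 8) ≤ d := by nlinarith [Real.sqrt_nonneg ((d : ℝ) ^ 2 - 8)]
  refine ⟨(d + √((d : ℝ) ^ 2 - 8)) / 4, (d - √((d : ℝ) ^ 2 - 8)) / 4, ?_, ?_, by ring,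
    by nlinarith⟩
  · simpa using (hirr.natCast_add d).div_natCast four_ne_zero
  · rw [abs_lt]; constructor <;> linarith

/-- The relations between `X n = ‖ψ xₙ‖`, `Y n = ‖ψ yₙ‖` and `B n = ‖ψ (xₙ + p^{-(d-3)})‖` along
a backward orbit, for a complex embedding `ψ`. -/
structure IsNormOrbit (d : ℕ) (X Y B : ℕ → ℝ) : Prop where
  x_succ : ∀ n, X (n + 1) = Y n
  sq_mul_eq_pow : ∀ n, Y (n + 1) ^ 2 * B n = Y n ^ d
  abs_sub_le : ∀ n, |B n - X n| ≤ 1 / 2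
  nonneg : ∀ n, 0 ≤ Y n

def IsAdmissible (d : ℕ) (t : ℝ) : Prop :=
  (5 ≤ d ∧ 1 ≤ t) ∨ (d = 4 ∧ (1 + √3) / 2 ≤ t)

def IsTrapped (t x y : ℝ) : Prop :=
  t ≤ x ∧ (1 + 1 / (2 * t)) * x ≤ y

lemma IsAdmissible.one_le {d : ℕ} {t : ℝ} (ht : IsAdmissible d t) : 1 ≤ t := by
  rcases ht with ⟨-, ht⟩ | ⟨-, ht⟩
  · exact ht
  · nlinarith [Real.sqrt_nonneg 3, Real.sq_sqrt (show (0 : ℝ) ≤ 3 by norm_num)]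

/-- The lower bound on `t` enters only here; for `d = 4` it says exactly `1 + 1/(2t) ≤ t`. -/
lemma one_add_pow_three_mul_le {d : ℕ} {t x : ℝ} (hd : 4 ≤ d) (ht : IsAdmissible d t)
    (hx : t ≤ x) :
    (1 + 1 / (2 * t)) ^ 3 * x ≤ ((1 + 1 / (2 * t)) * x) ^ (d - 2) := by
  have ht1 := ht.one_le
  have ha : 1 ≤ 1 + 1 / (2 * t) := le_add_of_nonneg_right (by positivity)
  have hx1 : 1 ≤ x := ht1.trans hx
  have hx0 : 0 ≤ x := by linarith
  rcases ht with ⟨hd5, -⟩ | ⟨rfl, ht⟩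
  · calc (1 + 1 / (2 * t)) ^ 3 * x ≤ (1 + 1 / (2 * t)) ^ (d - 2) * x ^ (d - 2) :=
          mul_le_mul (pow_le_pow_right₀ ha (by omega)) (le_self_pow₀ hx1 (by omega)) hx0
            (by positivity)
      _ = _ := (mul_pow _ _ _).symm
  · have hat : 1 + 1 / (2 * t) ≤ t := by
      rw [← sub_nonneg, show t - (1 + 1 / (2 * t)) = (2 * t ^ 2 - 2 * t - 1) / (2 * t) by
        field_simp; ring]
      apply div_nonneg _ (by linarith)
      nlinarith [Real.sqrt_nonneg 3, Real.sq_sqrt (show (0 : ℝ) ≤ 3 by norm_num)]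
    calc (1 + 1 / (2 * t)) ^ 3 * x = (1 + 1 / (2 * t)) ^ 2 * x * (1 + 1 / (2 * t)) := by ring
      _ ≤ (1 + 1 / (2 * t)) ^ 2 * x * x := by gcongr; linarith
      _ = _ := by ring

lemma IsTrapped.three_halves_le {t x y : ℝ} (ht : 1 ≤ t) (h : IsTrapped t x y) : 3 / 2 ≤ y := by
  obtain ⟨hx, hy⟩ := h
  have : 1 / (2 * t) * t = 1 / 2 := by field_simp
  nlinarith [mul_le_mul_of_nonneg_left hx (show 0 ≤ 1 / (2 * t) by positivity)]

namespace IsNormOrbit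

variable {d : ℕ} {X Y B : ℕ → ℝ} {t : ℝ}

lemma isTrapped_succ (hO : IsNormOrbit d X Y B) (hd : 4 ≤ d)
    (ht : IsAdmissible d t) {n : ℕ} (h : IsTrapped t (X n) (Y n)) :
    IsTrapped t (X (n + 1)) (Y (n + 1)) ∧ Y n ^ (d - 1) ≤ Y (n + 1) ^ 2 := by
  obtain ⟨hX, hY⟩ := h
  have ht0 : 0 < t := by linarith [ht.one_le]
  set a := 1 + 1 / (2 * t) with ha
  have ha1 : 1 ≤ a := le_add_of_nonneg_right (by positivity)
  have hX1 : 1 ≤ X n := ht.one_le.trans hX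
  have hhalf : 1 / 2 ≤ 1 / (2 * t) * X n := by
    calc (1 : ℝ) / 2 = 1 / (2 * t) * t := by field_simp
      _ ≤ 1 / (2 * t) * X n := by gcongr
  have hB := abs_le.mp (hO.abs_sub_le n)
  have hBpos : 0 < B n := by linarith
  have hBa : B n ≤ a * X n := by linarith
  have hBY : B n ≤ Y n := hBa.trans hY
  have hpow : a ^ 3 * X n ≤ Y n ^ (d - 2) :=
    (one_add_pow_three_mul_le hd ht hX).trans (pow_le_pow_left₀ (by nlinarith) hY _)
  have hd' : d = d - 2 + 2 := by omega
  have hsq : (a * Y n) ^ 2 ≤ Y (n + 1) ^ 2 := by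
    refine le_of_mul_le_mul_right ?_ hBpos
    have : 0 ≤ a * X n := by nlinarith
    rw [hO.sq_mul_eq_pow, hd', pow_add]
    calc (a * Y n) ^ 2 * B n ≤ (a * Y n) ^ 2 * (a * X n) := by gcongr
      _ = a ^ 3 * X n * Y n ^ 2 := by ring
      _ ≤ Y n ^ (d - 2) * Y n ^ 2 := by gcongr
  refine ⟨⟨?_, ?_⟩, ?_⟩
  · rw [hO.x_succ]; nlinarith
  · rw [hO.x_succ]
    exact (pow_le_pow_iff_left₀ (by nlinarith) (hO.nonneg _) two_ne_zero).mp hsq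
  · refine le_of_mul_le_mul_right ?_ hBpos
    rw [hO.sq_mul_eq_pow, show d = d - 1 + 1 by omega, pow_succ]
    exact mul_le_mul_of_nonneg_left hBY (pow_nonneg (hO.nonneg n) _)

lemma isTrapped_add (hO : IsNormOrbit d X Y B) (hd : 4 ≤ d)
    (ht : IsAdmissible d t) {n₀ : ℕ} (h : IsTrapped t (X n₀) (Y n₀)) (k : ℕ) :
    IsTrapped t (X (n₀ + k)) (Y (n₀ + k)) := by
  induction k with
  | zero => exact h
  | succ k ih => exact (hO.isTrapped_succ hd ht ih).1

lemma mul_log_le_log_succ (hO : IsNormOrbit d X Y B) (hd : 4 ≤ d)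
    (ht : IsAdmissible d t) {n : ℕ} (h : IsTrapped t (X n) (Y n)) :
    ((d : ℝ) - 1) / 2 * Real.log (Y n) ≤ Real.log (Y (n + 1)) := by
  have hY : 0 < Y n := by linarith [h.three_halves_le ht.one_le]
  have hlog := Real.log_le_log (by positivity) (hO.isTrapped_succ hd ht h).2
  rw [Real.log_pow, Real.log_pow, Nat.cast_sub (by omega)] at hlog
  push_cast at hlog
  linarith

lemma pow_mul_log_le (hO : IsNormOrbit d X Y B) (hd : 4 ≤ d)
    (ht : IsAdmissible d t) {n₀ : ℕ} (h : IsTrapped t (X n₀) (Y n₀)) (k : ℕ) :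
    (((d : ℝ) - 1) / 2) ^ k * Real.log (3 / 2) ≤ Real.log (Y (n₀ + k)) := by
  have hd' : (4 : ℝ) ≤ d := by exact_mod_cast hd
  calc (((d : ℝ) - 1) / 2) ^ k * Real.log (3 / 2)
      ≤ (((d : ℝ) - 1) / 2) ^ k * Real.log (Y (n₀ + 0)) := by
        refine mul_le_mul_of_nonneg_left ?_ (pow_nonneg (by linarith) _)
        exact Real.log_le_log (by norm_num) (h.three_halves_le ht.one_le)
    _ ≤ Real.log (Y (n₀ + k)) :=
      geom_le (u := fun j => Real.log (Y (n₀ + j))) (by linarith) k fun j _ =>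
        hO.mul_log_le_log_succ hd ht (hO.isTrapped_add hd ht h j)

lemma abs_log_recurrence_le (hO : IsNormOrbit d X Y B) {n : ℕ} (hY : 1 ≤ Y n)
    (hY₂ : 0 < Y (n + 2)) :
    |2 * Real.log (Y (n + 2)) - d * Real.log (Y (n + 1)) + Real.log (Y n)| ≤ Real.log 2 := by
  have hB : |B (n + 1) - Y n| ≤ 1 / 2 := hO.x_succ n ▸ hO.abs_sub_le (n + 1)
  have hBpos : 0 < B (n + 1) := by linarith [(abs_le.mp hB).1]
  have hrel := congrArg Real.log (hO.sq_mul_eq_pow (n + 1))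
  rw [Real.log_mul (by positivity) hBpos.ne', Real.log_pow, Real.log_pow] at hrel
  push_cast at hrel
  have := abs_log_sub_log_le_log_two hY hB
  rw [abs_sub_comm] at this
  convert this using 2
  linarith

lemma tendsto_abs_intCast_mul_log_add (hO : IsNormOrbit d X Y B) (hd : 4 ≤ d)
    (ht : IsAdmissible d t) {n₀ : ℕ} (h : IsTrapped t (X n₀) (Y n₀))
    {a b : ℤ} (hab : a ≠ 0 ∨ b ≠ 0) :
    Tendsto (fun k => |a * Real.log (Y (n₀ + k)) + b * Real.log (Y (n₀ + k + 1))|)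
      atTop atTop := by
  have hd' : (4 : ℝ) ≤ d := by exact_mod_cast hd
  have hY : ∀ k, 3 / 2 ≤ Y (n₀ + k) := fun k =>
    (hO.isTrapped_add hd ht h k).three_halves_le ht.one_le
  have hv : Tendsto (fun k => Real.log (Y (n₀ + k))) atTop atTop :=
    tendsto_atTop_of_geom_le (Real.log_pos (by linarith [hY 0])) (by linarith)
      fun k => hO.mul_log_le_log_succ hd ht (hO.isTrapped_add hd ht h k)
  obtain ⟨l, m, hl, hm, hsum, hprod⟩ := exists_irrational_and_abs_lt_one_roots hd
  obtain ⟨Z, hZ⟩ := exists_abs_sub_mul_le_of_abs_recurrence_le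
    (v := fun k => Real.log (Y (n₀ + k))) (E := Real.log 2 / 2) hsum hprod hm fun k => by
      have hY₂ : 3 / 2 ≤ Y (n₀ + k + 2) := hY (k + 2)
      have hrec := hO.abs_log_recurrence_le (n := n₀ + k) (by linarith [hY k]) (by linarith)
      calc |Real.log (Y (n₀ + k + 2)) - d / 2 * Real.log (Y (n₀ + k + 1))
            + 1 / 2 * Real.log (Y (n₀ + k))|
          = |2 * Real.log (Y (n₀ + k + 2)) - d * Real.log (Y (n₀ + k + 1))
            + Real.log (Y (n₀ + k))| / 2 := by
            rw [← abs_two, ← abs_div, abs_two]; ring_nf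
        _ ≤ Real.log 2 / 2 := by gcongr
  exact tendsto_abs_intCast_mul_add_intCast_mul hl hv hZ hab

end IsNormOrbit

lemma Finset.exists_ne_norm_le_card_mul_norm_of_sum_eq_zero {ι E : Type*}
    [NormedAddCommGroup E] {s : Finset ι} {a : ι → E} (hs : ∑ i ∈ s, a i = 0)
    (ha : ∃ i ∈ s, a i ≠ 0) :
    ∃ i ∈ s, ∃ j ∈ s, i ≠ j ∧ ‖a j‖ ≤ ‖a i‖ ∧ ‖a i‖ ≤ #s * ‖a j‖ := by
  classical
  obtain ⟨i₀, hi₀, hai₀⟩ := ha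
  obtain ⟨i, hi, hmax⟩ := s.exists_max_image (‖a ·‖) ⟨i₀, hi₀⟩
  have hpos : 0 < ‖a i‖ := (norm_pos_iff.mpr hai₀).trans_le (hmax i₀ hi₀)
  have hsum : ‖a i‖ ≤ ∑ j ∈ s.erase i, ‖a j‖ := by
    rw [← s.add_sum_erase a hi, add_eq_zero_iff_eq_neg] at hs
    rw [hs, norm_neg]
    exact norm_sum_le _ _
  obtain ⟨j, hj, hjmax⟩ := (s.erase i).exists_max_image (‖a ·‖)
    (Finset.nonempty_of_sum_ne_zero (by linarith : ∑ j ∈ s.erase i, ‖a j‖ ≠ 0))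
  refine ⟨i, hi, j, mem_of_mem_erase hj, (ne_of_mem_erase hj).symm,
    hmax j (mem_of_mem_erase hj), ?_⟩
  calc ‖a i‖ ≤ #(s.erase i) • ‖a j‖ := hsum.trans (sum_le_card_nsmul _ _ _ hjmax)
    _ ≤ #s * ‖a j‖ := by
      rw [nsmul_eq_mul]; gcongr; exact erase_subset _ _

namespace MvPolynomial

variable {ι 𝕜 : Type*} [Fintype ι] [NormedField 𝕜]

lemma log_norm_coeff_mul_prod_pow (q : MvPolynomial ι 𝕜) {z : ι → 𝕜} (hz : ∀ i, z i ≠ 0)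
    {e : ι →₀ ℕ} (he : e ∈ q.support) :
    Real.log ‖q.coeff e * ∏ i, z i ^ e i‖ =
      Real.log ‖q.coeff e‖ + ∑ i, (e i : ℝ) * Real.log ‖z i‖ := by
  rw [norm_mul, norm_prod, Real.log_mul (norm_ne_zero_iff.mpr (mem_support_iff.mp he))
    (Finset.prod_ne_zero_iff.mpr fun i _ => by simp [hz i]), Real.log_prod (fun i _ => by
      simp [hz i])]
  simp [Real.log_pow]

/-- Two distinct monomials of a vanishing polynomial must have comparable sizes at `z`. -/
lemma exists_ne_abs_sum_mul_log_le {q : MvPolynomial ι 𝕜} (hq : q ≠ 0) {z : ι → 𝕜}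
    (hz : ∀ i, z i ≠ 0) (h : eval z q = 0) :
    ∃ e ∈ q.support, ∃ f ∈ q.support, e ≠ f ∧
      |∑ i, ((e i : ℝ) - f i) * Real.log ‖z i‖| ≤
        Real.log #q.support + |Real.log ‖q.coeff e‖ - Real.log ‖q.coeff f‖| := by
  have hterm : ∀ e ∈ q.support, q.coeff e * ∏ i, z i ^ e i ≠ 0 := fun e he =>
    mul_ne_zero (mem_support_iff.mp he)
      (Finset.prod_ne_zero_iff.mpr fun i _ => pow_ne_zero _ (hz i))
  obtain ⟨e₀, he₀⟩ := support_nonempty.mpr hq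
  obtain ⟨e, he, f, hf, hef, hle, hge⟩ :=
    Finset.exists_ne_norm_le_card_mul_norm_of_sum_eq_zero (eval_eq' z q ▸ h) ⟨e₀, he₀, hterm e₀ he₀⟩
  refine ⟨e, he, f, hf, hef, ?_⟩
  have hfpos : 0 < ‖q.coeff f * ∏ i, z i ^ f i‖ := norm_pos_iff.mpr (hterm f hf)
  have hlog₁ := Real.log_le_log hfpos hle
  have hlog₂ := Real.log_le_log (hfpos.trans_le hle) hge
  rw [Real.log_mul (by simpa using Finset.card_ne_zero.mpr ⟨e, he⟩) hfpos.ne'] at hlog₂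
  rw [log_norm_coeff_mul_prod_pow q hz he, log_norm_coeff_mul_prod_pow q hz hf] at hlog₁ hlog₂
  have hsplit : ∑ i, ((e i : ℝ) - f i) * Real.log ‖z i‖ =
      (∑ i, (e i : ℝ) * Real.log ‖z i‖ - ∑ i, (f i : ℝ) * Real.log ‖z i‖) := by
    rw [← Finset.sum_sub_distrib]; simp_rw [sub_mul]
  rw [hsplit, abs_le]
  constructor <;> cases abs_cases (Real.log ‖q.coeff e‖ - Real.log ‖q.coeff f‖) <;> linarith

theorem eq_zero_of_eval_eq_zero_of_tendsto {q : MvPolynomial ι 𝕜} (z : ℕ → ι → 𝕜)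
    (hz : ∀ k i, z k i ≠ 0) (hq : ∀ k, eval (z k) q = 0)
    (hlog : ∀ m : ι → ℤ, m ≠ 0 →
      Tendsto (fun k => |∑ i, (m i : ℝ) * Real.log ‖z k i‖|) atTop atTop) :
    q = 0 := by
  classical
  by_contra hq0
  have hfar : ∀ᶠ k in atTop, ∀ ef ∈ (q.support ×ˢ q.support).filter (fun ef => ef.1 ≠ ef.2),
      Real.log #q.support + |Real.log ‖q.coeff ef.1‖ - Real.log ‖q.coeff ef.2‖| <
        |∑ i, ((ef.1 i : ℝ) - ef.2 i) * Real.log ‖z k i‖| := by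
    refine (Filter.eventually_all_finset _).mpr fun ef hef => ?_
    have hm : (fun i => (ef.1 i : ℤ) - ef.2 i) ≠ 0 := by
      intro h0
      refine (Finset.mem_filter.mp hef).2 (Finsupp.ext fun i => ?_)
      have := congrFun h0 i
      simp only [Pi.zero_apply, sub_eq_zero] at this
      exact_mod_cast this
    simpa using (hlog _ hm).eventually_gt_atTop
      (Real.log #q.support + |Real.log ‖q.coeff ef.1‖ - Real.log ‖q.coeff ef.2‖|)
  obtain ⟨k, hk⟩ := hfar.exists
  obtain ⟨e, he, f, hf, hef, hle⟩ := exists_ne_abs_sum_mul_log_le hq0 (hz k) (hq k)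
  exact (hle.trans_lt (hk (e, f) (by simp [he, hf, hef]))).false

end MvPolynomial

lemma NumberField.InfinitePlace.sum_mult_mul_eq_sum_embeddings {K : Type*} [Field K]
    [NumberField K] (g : InfinitePlace K → ℝ) :
    ∑ w, (w.mult : ℝ) * g w = ∑ φ : K →+* ℂ, g (mk φ) := by
  classical
  rw [← Finset.univ.sum_fiberwise (fun φ => mk φ)]
  refine Finset.sum_congr rfl fun w _ => ?_
  rw [Finset.sum_congr rfl fun φ hφ => congrArg g (Finset.mem_filter.mp hφ).2,
    Finset.sum_const, card_filter_mk_eq, nsmul_eq_mul]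

lemma sum_log_max_one_norm_le_heightK (K : IntermediateField ℚ Qbar)
    (hfd : FiniteDimensional ℚ K) (x y : K) (S : Finset (K →+* ℂ)) :
    (∑ φ ∈ S, Real.log (max 1 ‖φ y‖)) / Module.finrank ℚ K ≤ heightK K hfd [x, y] := by
  let : NumberField K := { to_charZero := inferInstance, to_finiteDimensional := hfd }
  set g : InfinitePlace K → ℝ := fun w => Real.log (([x, y].map (fun a => w a)).foldr max 1)
  have hg : ∀ w, 0 ≤ g w := fun w => Real.log_nonneg (by simp)
  have hfin : 0 ≤ ∑ᶠ v : IsDedekindDomain.HeightOneSpectrum (𝓞 K),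
      Real.log (([x, y].map (fun a => localFin v a)).foldr max 1) :=
    finsum_nonneg fun v => Real.log_nonneg (by simp)
  have hinf : ∑ φ ∈ S, Real.log (max 1 ‖φ y‖) ≤ ∑ᶠ w : InfinitePlace K, (w.mult : ℝ) * g w := by
    rw [finsum_eq_sum_of_fintype, InfinitePlace.sum_mult_mul_eq_sum_embeddings]
    refine (Finset.sum_le_sum fun φ _ => ?_).trans
      (Finset.sum_le_sum_of_subset_of_nonneg (Finset.subset_univ S) fun φ _ _ => hg _)
    refine Real.log_le_log (by positivity) ?_
    simp only [List.map_cons, List.map_nil, List.foldr_cons, List.foldr_nil, InfinitePlace.apply]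
    exact le_max_of_le_right (max_comm _ _).le
  rw [div_eq_inv_mul]
  unfold heightK
  gcongr
  linarith

instance : Algebra.IsAlgebraic ℚ Qbar := AlgebraicClosure.isAlgebraic ℚ

lemma IntermediateField.exists_finset_ringHom_extend {Ω : Type*} [Field Ω] [Algebra ℚ Ω]
    [IsAlgClosed Ω]
    (F K : IntermediateField ℚ Qbar) [FiniteDimensional ℚ F] [FiniteDimensional ℚ K]
    (σ : Qbar →+* Ω) :
    ∃ S : Finset (K →+* Ω), Module.finrank ℚ K ≤ #S * Module.finrank ℚ F ∧
      ∀ κ ∈ S, ∃ ψ : Qbar →+* Ω, (∀ a : K, ψ a = κ a) ∧ ∀ a : F, ψ a = σ a := by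
  classical
  let L := F ⊔ K
  have hFL : F ≤ L := le_sup_left
  have hKL : K ≤ L := le_sup_right
  let : Algebra F L := (inclusion hFL).toRingHom.toAlgebra
  let : Algebra K L := (inclusion hKL).toRingHom.toAlgebra
  let : Algebra F Ω := (σ.comp (algebraMap F Qbar)).toAlgebra
  have : IsScalarTower ℚ F L := .of_algebraMap_eq fun _ => rfl
  have : IsScalarTower ℚ K L := .of_algebraMap_eq fun _ => rfl
  have : FiniteDimensional ℚ L := finiteDimensional_sup F K
  have : FiniteDimensional F L := .right ℚ F L
  have : FiniteDimensional K L := .right ℚ K L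
  -- the `[L : F]` embeddings of `L` extending `σ` restrict to `K` with fibres of size `≤ [L : K]`
  let r : (L →ₐ[F] Ω) → (K →+* Ω) := fun ψ => ψ.toRingHom.comp (algebraMap K L)
  have hfiber : ∀ κ ∈ Finset.univ.image r,
      #{ψ | r ψ = κ} ≤ Module.finrank K L := by
    intro κ _
    let : Algebra K Ω := κ.toAlgebra
    rw [← AlgHom.card K L Ω, ← Fintype.card_coe]
    refine Fintype.card_le_of_injective (fun ψ => ⟨ψ.1.toRingHom, fun a =>
      DFunLike.congr_fun (Finset.mem_filter.mp ψ.2).2 a⟩) fun ψ₁ ψ₂ h => ?_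
    exact Subtype.ext (AlgHom.ext fun a => DFunLike.congr_fun (congrArg AlgHom.toRingHom h) a)
  refine ⟨Finset.univ.image r, ?_, ?_⟩
  · have hcount := Finset.card_le_mul_card_image Finset.univ _ hfiber
    rw [Finset.card_univ, AlgHom.card] at hcount
    have hL := (Module.finrank_mul_finrank ℚ F L).trans (Module.finrank_mul_finrank ℚ K L).symm
    have hpos : 0 < Module.finrank K L := Module.finrank_pos
    refine le_of_mul_le_mul_right ?_ hpos
    calc Module.finrank ℚ K * Module.finrank K L = Module.finrank ℚ F * Module.finrank F L :=
          hL.symm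
      _ ≤ Module.finrank ℚ F * (Module.finrank K L * #(Finset.univ.image r)) := by gcongr
      _ = _ := by ring
  · intro κ hκ
    obtain ⟨ψ, -, rfl⟩ := Finset.mem_image.mp hκ
    let : Algebra L Ω := ψ.toRingHom.toAlgebra
    have : Algebra.IsAlgebraic L Qbar := .tower_top (K := ℚ) L
    let ψ' : Qbar →ₐ[L] Ω := IsAlgClosed.lift
    exact ⟨ψ'.toRingHom, fun a => ψ'.commutes (inclusion hKL a),
      fun a => (ψ'.commutes (inclusion hFL a)).trans (ψ.commutes a)⟩

lemma eventually_pow_le_mul_pow {C D a : ℝ} (hC : 0 ≤ C) (hCD : C < D) (ha : 0 < a) :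
    ∀ᶠ n in atTop, C ^ n ≤ a * D ^ n := by
  filter_upwards [(isLittleO_pow_pow_of_lt_left hC hCD).bound ha] with n hn
  simpa [abs_of_nonneg hC, abs_of_nonneg (hC.trans hCD.le)] using hn

namespace IsBackwardOrbit

variable {d p : ℕ} {x₀ : Qbar} {s : ℕ → Qbar × Qbar} {t : ℝ}

lemma sq_mul_add_eq_pow (hs : IsBackwardOrbit d p x₀ s) (n : ℕ) :
    (s (n + 1)).2 ^ 2 * ((s n).1 + ((p : Qbar) ^ (d - 3))⁻¹) = (s n).2 ^ d := by
  obtain ⟨hy, hx, hxy⟩ := hs.2 n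
  rw [hx, hxy]
  field_simp
  ring

lemma isNormOrbit (hs : IsBackwardOrbit d p x₀ s) (hd : 4 ≤ d) (hp : p.Prime)
    (ψ : Qbar →+* ℂ) :
    IsNormOrbit d (fun n => ‖ψ (s n).1‖) (fun n => ‖ψ (s n).2‖)
      (fun n => ‖ψ ((s n).1 + ((p : Qbar) ^ (d - 3))⁻¹)‖) where
  x_succ n := by rw [(hs.2 n).2.2]
  sq_mul_eq_pow n := by
    rw [← norm_pow, ← norm_mul, ← map_pow, ← map_mul, hs.sq_mul_add_eq_pow, map_pow, norm_pow]
  abs_sub_le n := by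
    have hp2 : (2 : ℝ) ≤ p := by exact_mod_cast hp.two_le
    have hc : ‖ψ ((p : Qbar) ^ (d - 3))⁻¹‖ ≤ 1 / 2 := by
      rw [map_inv₀, map_pow, map_natCast, norm_inv, norm_pow, Complex.norm_natCast, one_div]
      exact inv_anti₀ two_pos (hp2.trans (le_self_pow₀ (by linarith) (by omega)))
    rw [map_add]
    exact (abs_norm_sub_norm_le _ _).trans (by simpa using hc)
  nonneg _ := norm_nonneg _

lemma exists_pos_mul_pow_le_heightK (hs : IsBackwardOrbit d p x₀ s) (hd : 4 ≤ d)
    (hp : p.Prime) (ht : IsAdmissible d t) {n₀ : ℕ}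
    (σ : Qbar →+* ℂ) (h : IsTrapped t ‖σ (s n₀).1‖ ‖σ (s n₀).2‖) :
    ∃ a > 0, ∀ n, n₀ ≤ n → ∀ (K : IntermediateField ℚ Qbar) (hfd : FiniteDimensional ℚ K)
      (h1 : (s n).1 ∈ K) (h2 : (s n).2 ∈ K),
      a * (((d : ℝ) - 1) / 2) ^ n ≤ heightK K hfd [⟨(s n).1, h1⟩, ⟨(s n).2, h2⟩] := by
  let F := IntermediateField.adjoin ℚ {(s n₀).1, (s n₀).2}
  have : FiniteDimensional ℚ F :=
    IntermediateField.finiteDimensional_adjoin fun x _ => Algebra.IsIntegral.isIntegral x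
  have hd' : (4 : ℝ) ≤ d := by exact_mod_cast hd
  set D := ((d : ℝ) - 1) / 2 with hD
  have hD0 : 0 < D := by linarith
  have hF : (0 : ℝ) < Module.finrank ℚ F := by exact_mod_cast Module.finrank_pos
  have hlog : 0 < Real.log (3 / 2) := Real.log_pos (by norm_num)
  refine ⟨Real.log (3 / 2) / (Module.finrank ℚ F * D ^ n₀), by positivity, ?_⟩
  intro n hn K hfd h1 h2
  obtain ⟨k, rfl⟩ := Nat.exists_eq_add_of_le hn
  obtain ⟨S, hcard, hext⟩ := IntermediateField.exists_finset_ringHom_extend F K σ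
  have hS : ∀ κ ∈ S, D ^ k * Real.log (3 / 2) ≤ Real.log (max 1 ‖κ ⟨(s (n₀ + k)).2, h2⟩‖) := by
    intro κ hκ
    obtain ⟨ψ, hψK, hψF⟩ := hext κ hκ
    have hψ : ∀ x ∈ ({(s n₀).1, (s n₀).2} : Set Qbar), ψ x = σ x := fun x hx =>
      hψF ⟨x, IntermediateField.subset_adjoin ℚ _ hx⟩
    have htrap : IsTrapped t ‖ψ (s n₀).1‖ ‖ψ (s n₀).2‖ := by
      rwa [hψ _ (by simp), hψ _ (by simp)]
    have hpos : 0 < ‖ψ (s (n₀ + k)).2‖ := by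
      linarith [((hs.isNormOrbit hd hp ψ).isTrapped_add hd ht htrap k).three_halves_le
        ht.one_le]
    rw [← hψK]
    exact ((hs.isNormOrbit hd hp ψ).pow_mul_log_le hd ht htrap k).trans
      (Real.log_le_log hpos (le_max_right _ _))
  have hK : (0 : ℝ) < Module.finrank ℚ K := by exact_mod_cast Module.finrank_pos
  calc Real.log (3 / 2) / (Module.finrank ℚ F * D ^ n₀) * D ^ (n₀ + k)
      = D ^ k * Real.log (3 / 2) / Module.finrank ℚ F := by
        rw [pow_add]; field_simp
    _ ≤ #S * (D ^ k * Real.log (3 / 2)) / Module.finrank ℚ K := by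
        rw [div_le_div_iff₀ hF hK]
        have : (Module.finrank ℚ K : ℝ) ≤ #S * Module.finrank ℚ F := by exact_mod_cast hcard
        nlinarith [mul_le_mul_of_nonneg_left this (by positivity : 0 ≤ D ^ k * Real.log (3 / 2))]
    _ ≤ (∑ κ ∈ S, Real.log (max 1 ‖κ ⟨(s (n₀ + k)).2, h2⟩‖)) / Module.finrank ℚ K := by
        gcongr
        simpa using Finset.card_nsmul_le_sum S _ _ hS
    _ ≤ _ := sum_log_max_one_norm_le_heightK K hfd _ _ S

lemma eq_zero_of_forall_eval_eq_zero (hs : IsBackwardOrbit d p x₀ s) (hd : 4 ≤ d)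
    (hp : p.Prime) (ht : IsAdmissible d t) {n₀ : ℕ}
    (σ : Qbar →+* ℂ) (h : IsTrapped t ‖σ (s n₀).1‖ ‖σ (s n₀).2‖)
    {q : MvPolynomial (Fin 2) Qbar} (hq : ∀ n, MvPolynomial.eval ![(s n).1, (s n).2] q = 0) :
    q = 0 := by
  have hO := hs.isNormOrbit hd hp σ
  have hx : ∀ k, (s (n₀ + k + 1)).1 = (s (n₀ + k)).2 := fun k => ((hs.2 _).2.2).symm
  have hy : ∀ k, σ (s (n₀ + k)).2 ≠ 0 := fun k => norm_pos_iff.mp (by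
    linarith [(hO.isTrapped_add hd ht h k).three_halves_le ht.one_le])
  refine MvPolynomial.map_injective σ σ.injective ?_
  rw [map_zero]
  refine MvPolynomial.eq_zero_of_eval_eq_zero_of_tendsto
    (fun k => σ ∘ ![(s (n₀ + k + 1)).1, (s (n₀ + k + 1)).2]) (fun k i => ?_) (fun k => ?_)
    fun m hm => ?_
  · fin_cases i
    · simpa [hx] using hy k
    · simpa [add_assoc] using hy (k + 1)
  · rw [MvPolynomial.eval_map, ← MvPolynomial.eval₂_comp, hq, map_zero]
  · have hab : m 0 ≠ 0 ∨ m 1 ≠ 0 := by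
      by_contra! h0
      exact hm (funext (Fin.forall_fin_two.mpr h0))
    convert hO.tendsto_abs_intCast_mul_log_add hd ht h hab using 2 with k
    simp [Fin.sum_univ_two, hx]

end IsBackwardOrbit

theorem stmt17_general (d p : ℕ) (hd : 4 ≤ d) (hp : p.Prime)
    (x₀ : Qbar)
    (s : ℕ → Qbar × Qbar) (hs : IsBackwardOrbit d p x₀ s)
    (t : ℝ) (ht : (5 ≤ d ∧ 1 ≤ t) ∨ (d = 4 ∧ (1 + Real.sqrt 3) / 2 ≤ t))
    (n₀ : ℕ) (σ : Qbar →+* ℂ)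
    (hσy : (1 + 1 / (2 * t)) * ‖σ (s n₀).1‖ ≤ ‖σ (s n₀).2‖)
    (hσx : t ≤ ‖σ (s n₀).1‖) :
    (∀ C : ℝ, 0 < C → C < ((d : ℝ) - 1) / 2 →
      ∃ N : ℕ, ∀ n, N ≤ n →
        ∀ (K : IntermediateField ℚ Qbar) (hfd : FiniteDimensional ℚ K)
          (h1 : (s n).1 ∈ K) (h2 : (s n).2 ∈ K),
          C ^ n ≤ heightK K hfd [⟨(s n).1, h1⟩, ⟨(s n).2, h2⟩]) ∧
    (∀ q : MvPolynomial (Fin 2) Qbar,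
      (∀ n : ℕ, MvPolynomial.eval ![(s n).1, (s n).2] q = 0) → q = 0) := by
  have htrap : IsTrapped t ‖σ (s n₀).1‖ ‖σ (s n₀).2‖ := ⟨hσx, hσy⟩
  refine ⟨fun C hC hCD => ?_, fun q hq => hs.eq_zero_of_forall_eval_eq_zero hd hp ht σ htrap hq⟩
  obtain ⟨a, ha, hheight⟩ := hs.exists_pos_mul_pow_le_heightK hd hp ht σ htrap
  obtain ⟨N, hN⟩ := eventually_atTop.mp
    ((eventually_pow_le_mul_pow hC.le hCD ha).and (eventually_ge_atTop n₀))
  exact ⟨N, fun n hn K hfd h1 h2 => (hN n hn).1.trans (hheight n (hN n hn).2 K hfd h1 h2)⟩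

/-- Let `d ≥ 4`, `p` prime, `x₀ ∈ ℚ̄` a root of `x^{d-2} - x - p^{-(d-3)}`, and
`(x_n,y_n)_{n≥0}` a backward orbit of `(x₀,x₀)` under `f_{d,p}`.  Let `t ∈ ℝ` with either
(`d ≥ 5` and `t ≥ 1`) or (`d = 4` and `t ≥ (1+√3)/2`).  If for some index `n₀` and some
ring embedding `σ : ℚ̄ → ℂ` one has `|σ(y_{n₀})| ≥ (1 + 1/(2t))|σ(x_{n₀})|` and
`|σ(x_{n₀})| ≥ t`, then (a) for every `0 < C < (d-1)/2` the affine Weil height of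
`(x_n,y_n)` (computed in any number field `K ⊆ ℚ̄` containing the coordinates) is
eventually at least `C^n`; and (b) the set `{(x_n,y_n)}` is Zariski dense in `𝔸²_ℚ̄`. -/
theorem stmt17 (d p : ℕ) (hd : 4 ≤ d) (hp : p.Prime)
    (x₀ : Qbar) (hx₀ : x₀ ^ (d - 2) - x₀ - ((p : Qbar) ^ (d - 3))⁻¹ = 0)
    (s : ℕ → Qbar × Qbar) (hs : IsBackwardOrbit d p x₀ s)
    (t : ℝ) (ht : (5 ≤ d ∧ 1 ≤ t) ∨ (d = 4 ∧ (1 + Real.sqrt 3) / 2 ≤ t))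
    (n₀ : ℕ) (σ : Qbar →+* ℂ)
    (hσy : (1 + 1 / (2 * t)) * ‖σ (s n₀).1‖ ≤ ‖σ (s n₀).2‖)
    (hσx : t ≤ ‖σ (s n₀).1‖) :
    (∀ C : ℝ, 0 < C → C < ((d : ℝ) - 1) / 2 →
      ∃ N : ℕ, ∀ n, N ≤ n →
        ∀ (K : IntermediateField ℚ Qbar) (hfd : FiniteDimensional ℚ K)
          (h1 : (s n).1 ∈ K) (h2 : (s n).2 ∈ K),
          C ^ n ≤ heightK K hfd [⟨(s n).1, h1⟩, ⟨(s n).2, h2⟩]) ∧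
    (∀ q : MvPolynomial (Fin 2) Qbar,
      (∀ n : ℕ, MvPolynomial.eval ![(s n).1, (s n).2] q = 0) → q = 0) :=
  stmt17_general d p hd hp x₀ s hs t ht n₀ σ hσy hσx
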